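/- Let G be a triangle-free simple graph on 7 vertices containing a cycle C of length 5, and let w1, w2 be the two vertices not on C. If each of w1 and w2 has exactly 2 neighbors on C, then G has a spanning closed trail (a closed walk traversing each of its edges at most once) that contains all edges between {w1, w2} and C. -/

import Mathlib

/-!
Number the 5-cycle by `ZMod 5`. Triangle-freeness forces the two cycle neighbours of each outer
vertex to be two apart, at `a` and `a + 2`, so each outer vertex is the apex of an ear over the
cycle. After rotating the numbering so that the first ear sits over `0` and `2`, the cycle with
both ears is the injective homomorphic image of one of five fixed graphs on seven vertices,
indexed by the offset `d` of the second ear. Each of these has a closed trail through every vertex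
and along every ear edge (checked by computation), and its image is the required trail in `G`.
-/

open SimpleGraph Function Sum

variable {V : Type*} {G : SimpleGraph V}

theorem SimpleGraph.Walk.IsCycle.exists_zmod_enumeration {v : V} {c : G.Walk v v}
    (hc : c.IsCycle) {n : ℕ} (hn : c.length = n) :
    ∃ u : ZMod n → V, Injective u ∧ (∀ i, G.Adj (u i) (u (i + 1))) ∧
      ∀ x, x ∈ c.support ↔ x ∈ Set.range u := by
  have hn3 : 3 ≤ n := hn ▸ hc.three_le_length
  have : NeZero n := ⟨by omega⟩
  refine ⟨fun i => c.getVert i.val, fun i j hij => ZMod.val_injective n ?_, fun i => ?_,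
    fun x => ?_⟩
  · have := i.val_lt
    have := j.val_lt
    exact hc.getVert_injOn' (by simp only [Set.mem_ofPred_eq]; omega)
      (by simp only [Set.mem_ofPred_eq]; omega) hij
  · have hi := i.val_lt
    have hsucc : (i + 1).val = (i.val + 1) % n := by
      rw [ZMod.val_add, ZMod.val_one_eq_one_mod, Nat.add_mod_mod]
    have hadj := c.adj_getVert_succ (i := i.val) (by omega)
    show G.Adj (c.getVert i.val) (c.getVert (i + 1).val)
    rcases Nat.lt_or_ge (i.val + 1) n with h | h
    · rwa [hsucc, Nat.mod_eq_of_lt h]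
    · rw [hsucc, show i.val + 1 = n by omega, Nat.mod_self, Walk.getVert_zero]
      rwa [show i.val + 1 = c.length by omega, Walk.getVert_length] at hadj
  · rw [Walk.mem_support_iff_exists_getVert]
    constructor
    · rintro ⟨m, rfl, hm⟩
      rcases Nat.lt_or_ge m n with h | h
      · exact ⟨m, by simp [ZMod.val_cast_of_lt h]⟩
      · refine ⟨0, ?_⟩
        simp [show m = c.length by omega, Walk.getVert_length]
    · rintro ⟨i, rfl⟩
      exact ⟨i.val, rfl, hn ▸ i.val_lt.le⟩

theorem exists_neighborSet_inter_eq_of_five_cycle (htf : G.CliqueFree 3) {u : ZMod 5 → V}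
    (hadj : ∀ i, G.Adj (u i) (u (i + 1))) {w : V}
    (hw : (Set.range u ∩ G.neighborSet w).ncard = 2) :
    ∃ a, Set.range u ∩ G.neighborSet w = {u a, u (a + 2)} := by
  obtain ⟨x, y, hxy, hS⟩ := Set.ncard_eq_two.mp hw
  obtain ⟨⟨i, rfl⟩, hwi⟩ : x ∈ Set.range u ∩ G.neighborSet w := hS ▸ by simp
  obtain ⟨⟨j, rfl⟩, hwj⟩ : y ∈ Set.range u ∩ G.neighborSet w := hS ▸ by simp
  have hind := isIndepSet_neighborSet_of_triangleFree G htf w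
  obtain ⟨d, rfl⟩ : ∃ d, j = i + d := ⟨j - i, by ring⟩
  obtain rfl | rfl | rfl | rfl : d = 1 ∨ d = 2 ∨ d = 3 ∨ d = 4 :=
    (by decide : ∀ d : ZMod 5, d ≠ 0 → d = 1 ∨ d = 2 ∨ d = 3 ∨ d = 4) d
      (by rintro rfl; simp at hxy)
  · exact (hind hwi hwj hxy (hadj i)).elim
  · exact ⟨i, hS⟩
  · refine ⟨i + 3, ?_⟩
    rw [hS, Set.pair_comm, add_assoc, show (3 + 2 : ZMod 5) = 0 by decide, add_zero]
  · have := hadj (i + 4)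
    rw [add_assoc, show (4 + 1 : ZMod 5) = 0 by decide, add_zero] at this
    exact (hind hwj hwi hxy.symm this).elim

/-- `inl i` is the `i`-th vertex of a 5-cycle and `inr k` the apex of an ear over
`inl (e k)` and `inl (e k + 2)`. -/
def earRel (e : Fin 2 → ZMod 5) : ZMod 5 ⊕ Fin 2 → ZMod 5 ⊕ Fin 2 → Prop
  | inl i, inl j => j = i + 1
  | inr k, inl i => i = e k ∨ i = e k + 2
  | _, _ => False

instance (e : Fin 2 → ZMod 5) : DecidableRel (earRel e) := fun x y => by
  cases x <;> cases y <;> unfold earRel <;> infer_instance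

abbrev earModel (e : Fin 2 → ZMod 5) : SimpleGraph (ZMod 5 ⊕ Fin 2) := fromRel (earRel e)

def earModel.hom {u : ZMod 5 → V} (hadj : ∀ i, G.Adj (u i) (u (i + 1))) {w : Fin 2 → V}
    {e : Fin 2 → ZMod 5} (hear : ∀ k, G.Adj (w k) (u (e k)) ∧ G.Adj (w k) (u (e k + 2))) :
    earModel e →g G where
  toFun := Sum.elim u w
  map_rel' := by
    have hrel : ∀ x y, earRel e x y → G.Adj (Sum.elim u w x) (Sum.elim u w y) := by
      rintro (i | k) (j | l) h <;> simp only [earRel] at h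
      · exact h ▸ hadj i
      · rcases h with rfl | rfl
        exacts [(hear k).1, (hear k).2]
    rintro x y ⟨-, h | h⟩
    exacts [hrel x y h, (hrel y x h).symm]

theorem earModel_exists_trail (d : ZMod 5) :
    ∃ t : (earModel ![0, d]).Walk (inl 0) (inl 0), t.IsTrail ∧ (∀ x, x ∈ t.support) ∧
      ∀ k, s(inr k, inl (![0, d] k)) ∈ t.edges ∧
        s(inr k, inl (![0, d] k + 2)) ∈ t.edges := by
  fin_cases d <;> [
    refine ⟨.ofSupport [inl 0, inr 0, inl 2, inr 1, inl 0, inl 1, inl 2, inl 3, inl 4, inl 0]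
      (by simp) (by decide), ?_⟩;
    refine ⟨.ofSupport [inl 0, inr 0, inl 2, inl 1, inr 1, inl 3, inl 4, inl 0]
      (by simp) (by decide), ?_⟩;
    refine ⟨.ofSupport [inl 0, inr 0, inl 2, inr 1, inl 4, inl 3, inl 2, inl 1, inl 0]
      (by simp) (by decide), ?_⟩;
    refine ⟨.ofSupport [inl 0, inr 1, inl 3, inl 4, inl 0, inl 1, inl 2, inr 0, inl 0]
      (by simp) (by decide), ?_⟩;
    refine ⟨.ofSupport [inl 0, inl 1, inr 1, inl 4, inl 3, inl 2, inr 0, inl 0]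
      (by simp) (by decide), ?_⟩] <;>
  refine ⟨⟨by decide⟩, ?_, by decide⟩ <;>
  simp only [Walk.ofSupport, List.head_cons, List.getLast_cons_cons, List.getLast_singleton,
    Walk.support_cons, Walk.support_nil, List.mem_cons, List.not_mem_nil,
    or_false] <;>
  decide

theorem exists_isTrail_of_ears {u : ZMod 5 → V} (hu : Injective u)
    (hadj : ∀ i, G.Adj (u i) (u (i + 1))) {w : Fin 2 → V} (hw : Injective w)
    (hwu : ∀ k i, w k ≠ u i) {e : Fin 2 → ZMod 5}
    (hnbr : ∀ k, Set.range u ∩ G.neighborSet (w k) = {u (e k), u (e k + 2)}) :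
    ∃ (x : V) (t : G.Walk x x), t.IsTrail ∧ (∀ i, u i ∈ t.support) ∧
      (∀ k, w k ∈ t.support) ∧ ∀ k i, G.Adj (w k) (u i) → s(w k, u i) ∈ t.edges := by
  set d := e 1 - e 0
  have he : ∀ k, e 0 + ![0, d] k = e k := Fin.forall_fin_two.mpr ⟨by simp, by simp [d]⟩
  set u' : ZMod 5 → V := fun i => u (e 0 + i)
  have hnbr' (k : Fin 2) (i : ZMod 5) :
      G.Adj (w k) (u' i) ↔ i = ![0, d] k ∨ i = ![0, d] k + 2 := by
    have := Set.ext_iff.mp (hnbr k) (u' i)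
    simp only [Set.mem_inter_iff, Set.mem_range_self, true_and, mem_neighborSet,
      Set.mem_insert_iff, Set.mem_singleton_iff, hu.eq_iff, u'] at this
    rw [this, ← he k, add_assoc, (add_right_injective (e 0)).eq_iff,
      (add_right_injective (e 0)).eq_iff]
  let φ := earModel.hom (u := u') (fun i => by simpa [u', add_assoc] using hadj (e 0 + i))
    (e := ![0, d]) fun k => ⟨(hnbr' k _).mpr (.inl rfl), (hnbr' k _).mpr (.inr rfl)⟩
  have hφ : Injective φ :=
    (hu.comp (add_right_injective (e 0))).sumElim hw fun _ k => (hwu k _).symm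
  obtain ⟨t, htrail, hcov, hears⟩ := earModel_exists_trail d
  refine ⟨_, t.map φ, htrail.map hφ, fun i => ?_, fun k => ?_, fun k i hki => ?_⟩
  · have hi : φ (inl (i - e 0)) = u i := by simp [φ, earModel.hom, u']
    rw [Walk.support_map, ← hi]
    exact List.mem_map_of_mem (hcov _)
  · rw [Walk.support_map]
    exact List.mem_map_of_mem (f := φ) (hcov (inr k))
  · have hi : u' (i - e 0) = u i := by simp [u']
    rw [← hi, hnbr'] at hki
    have hedge : s(w k, u i) = Sym2.map φ s(inr k, inl (i - e 0)) := by
      simp [φ, earModel.hom, u']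
    rw [hedge, Walk.edges_map]
    apply List.mem_map_of_mem
    rcases hki with h | h <;> rw [h]
    exacts [(hears k).1, (hears k).2]

theorem stmt_0 (G : SimpleGraph (Fin 7)) (htf : G.CliqueFree 3)
    {v : Fin 7} (c : G.Walk v v) (hc : c.IsCycle) (hlen : c.length = 5)
    (w1 w2 : Fin 7) (hw : w1 ≠ w2)
    (hout : ∀ x : Fin 7, x ∉ c.support ↔ (x = w1 ∨ x = w2))
    (hn1 : {u | u ∈ c.support ∧ G.Adj w1 u}.ncard = 2)
    (hn2 : {u | u ∈ c.support ∧ G.Adj w2 u}.ncard = 2) :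
    ∃ (t0 : Fin 7) (t : G.Walk t0 t0), t.IsTrail ∧ (∀ x : Fin 7, x ∈ t.support) ∧
      ∀ a b : Fin 7, (a = w1 ∨ a = w2) → b ∈ c.support → G.Adj a b →
        s(a, b) ∈ t.edges := by
  obtain ⟨u, hu, hadj, hsupp⟩ := hc.exists_zmod_enumeration hlen
  have hset (w : Fin 7) :
      {x | x ∈ c.support ∧ G.Adj w x} = Set.range u ∩ G.neighborSet w := by
    ext; simp [hsupp]
  obtain ⟨a1, ha1⟩ := exists_neighborSet_inter_eq_of_five_cycle htf hadj (hset w1 ▸ hn1)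
  obtain ⟨a2, ha2⟩ := exists_neighborSet_inter_eq_of_five_cycle htf hadj (hset w2 ▸ hn2)
  have hwu : ∀ k i, ![w1, w2] k ≠ u i := by
    intro k i h
    have : u i ∉ c.support := (hout _).mpr (by fin_cases k <;> simp_all)
    exact this ((hsupp _).mpr ⟨i, rfl⟩)
  obtain ⟨x, t, ht, hcov_u, hcov_w, hedges⟩ := exists_isTrail_of_ears hu hadj
    (w := ![w1, w2]) (by simpa [Injective, Fin.forall_fin_two] using ⟨hw, hw.symm⟩) hwu
    (e := ![a1, a2]) (Fin.forall_fin_two.mpr ⟨ha1, ha2⟩)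
  refine ⟨x, t, ht, fun y => ?_, ?_⟩
  · by_cases hy : y ∈ c.support
    · obtain ⟨i, rfl⟩ := (hsupp y).mp hy
      exact hcov_u i
    · rcases (hout y).mp hy with rfl | rfl
      exacts [hcov_w 0, hcov_w 1]
  · rintro a b (rfl | rfl) hb hab <;> obtain ⟨i, rfl⟩ := (hsupp b).mp hb
    exacts [hedges 0 i hab, hedges 1 i hab]
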